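/- Let P₁, P₂ be groups, G an abelian group, and φ : P₁ → G, ψ : P₂ → G surjective group homomorphisms. Let F = P₁ × P₂ and let K be the kernel of the homomorphism F → G given by (p,q) ↦ φ(p) − ψ(q). Then the commutator subgroup ⁅F, F⁆ is contained in the subgroup of F generated by ⁅K, K⁆ together with the set of all commutators [(p,1),(p′,1)] with p, p′ ∈ P₁. -/

import Mathlib

/-!
Every commutator in `P₁ × P₂` splits as `⁅(p, 1), (p', 1)⁆ * ⁅(1, q), (1, q')⁆`, since the two
direct factors commute. The first factor is a generator. For the second, surjectivity of `φ`
lifts `q, q'` to elements `(p₀, q), (p₀', q')` of `K`, and splitting their commutator the same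
way gives `⁅(1, q), (1, q')⁆ = ⁅(p₀, 1), (p₀', 1)⁆⁻¹ * ⁅(p₀, q), (p₀', q')⁆`.
-/

open scoped commutatorElement

namespace Prod

variable {P₁ P₂ : Type*} [Group P₁] [Group P₂]

theorem commutatorElement_mk (a a' : P₁) (b b' : P₂) :
    ⁅((a, b) : P₁ × P₂), (a', b')⁆ =
      ⁅((a, 1) : P₁ × P₂), (a', 1)⁆ * ⁅((1, b) : P₁ × P₂), (1, b')⁆ := by
  ext <;> simp [commutatorElement_def]

theorem commutator_top_le_closure_of_forall_exists_mem {K : Subgroup (P₁ × P₂)}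
    (hK : ∀ q : P₂, ∃ p, (p, q) ∈ K) :
    ⁅(⊤ : Subgroup (P₁ × P₂)), (⊤ : Subgroup (P₁ × P₂))⁆ ≤
      Subgroup.closure ((⁅K, K⁆ : Subgroup (P₁ × P₂)) ∪
        {x : P₁ × P₂ | ∃ p p' : P₁, x = ⁅((p, 1) : P₁ × P₂), ((p', 1) : P₁ × P₂)⁆}) := by
  set S : Set (P₁ × P₂) := (⁅K, K⁆ : Subgroup (P₁ × P₂)) ∪
    {x : P₁ × P₂ | ∃ p p' : P₁, x = ⁅((p, 1) : P₁ × P₂), ((p', 1) : P₁ × P₂)⁆}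
  rw [Subgroup.commutator_le]
  rintro ⟨p, q⟩ - ⟨p', q'⟩ -
  have hfirst (a a' : P₁) : ⁅((a, 1) : P₁ × P₂), (a', 1)⁆ ∈ Subgroup.closure S :=
    Subgroup.subset_closure (Or.inr ⟨a, a', rfl⟩)
  obtain ⟨p₀, hp₀⟩ := hK q
  obtain ⟨p₀', hp₀'⟩ := hK q'
  have hlift : ⁅((p₀, q) : P₁ × P₂), (p₀', q')⁆ ∈ Subgroup.closure S :=
    Subgroup.subset_closure (Or.inl (Subgroup.commutator_mem_commutator hp₀ hp₀'))
  rw [commutatorElement_mk] at hlift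
  have hsecond := mul_mem (inv_mem (hfirst p₀ p₀')) hlift
  rw [inv_mul_cancel_left] at hsecond
  rw [commutatorElement_mk]
  exact mul_mem (hfirst p p') hsecond

end Prod

theorem commutator_le_closure_kernel_commutators_and_first_factor_general
    {P₁ P₂ G : Type*} [Group P₁] [Group P₂] [CommGroup G]
    (φ : P₁ →* G) (ψ : P₂ →* G)
    (hφ : Function.Surjective φ)
    (K : Subgroup (P₁ × P₂))
    (hK : ∀ p q, (p, q) ∈ K ↔ φ p = ψ q) :
    ⁅(⊤ : Subgroup (P₁ × P₂)), (⊤ : Subgroup (P₁ × P₂))⁆ ≤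
      Subgroup.closure ((⁅K, K⁆ : Subgroup (P₁ × P₂)) ∪
        {x : P₁ × P₂ | ∃ p p' : P₁, x = ⁅((p, 1) : P₁ × P₂), ((p', 1) : P₁ × P₂)⁆}) :=
  Prod.commutator_top_le_closure_of_forall_exists_mem fun q =>
    (hφ (ψ q)).imp fun _ hp => (hK _ _).2 hp

/-- With `F = P₁ × P₂` and `K` the kernel of `(p,q) ↦ φ(p) - ψ(q)`,
the commutator subgroup `⁅F,F⁆` is contained in the subgroup generated by `⁅K,K⁆`
together with all commutators `⁅(p,1), (p',1)⁆`, `p, p' ∈ P₁`. -/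
theorem commutator_le_closure_kernel_commutators_and_first_factor
    {P₁ P₂ G : Type*} [Group P₁] [Group P₂] [CommGroup G]
    (φ : P₁ →* G) (ψ : P₂ →* G)
    (hφ : Function.Surjective φ) (hψ : Function.Surjective ψ)
    (K : Subgroup (P₁ × P₂))
    (hK : ∀ p q, (p, q) ∈ K ↔ φ p = ψ q) :
    ⁅(⊤ : Subgroup (P₁ × P₂)), (⊤ : Subgroup (P₁ × P₂))⁆ ≤
      Subgroup.closure ((⁅K, K⁆ : Subgroup (P₁ × P₂)) ∪
        {x : P₁ × P₂ | ∃ p p' : P₁, x = ⁅((p, 1) : P₁ × P₂), ((p', 1) : P₁ × P₂)⁆}) :=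
  commutator_le_closure_kernel_commutators_and_first_factor_general φ ψ hφ K hK
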